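/- Define s_0: C → A* by 0 ↦ c, 1 ↦ ε, 2 ↦ ε, 3 ↦ c, 4 ↦ c, 5 ↦ c, 6 ↦ ε, 7 ↦ a, 8 ↦ c, and s_1: C → A* by 0 ↦ ε, 1 ↦ a, 2 ↦ a, 3 ↦ ε, 4 ↦ ε, 5 ↦ ε, 6 ↦ a, 7 ↦ a, 8 ↦ ε. Then for every n ≥ 0 and each i ∈ {0,1}, writing x = w[n] for the last letter of w[:(n+1)], one has the equality of finite words τ_i(π(μ(w[:(n+1)]))) · s_i(x) = φ_i(τ_i(π(w[:(n+1)]))). In particular, τ_i(π(μ(w[:(n+1)]))) is a prefix of φ_i(τ_i(π(w[:(n+1)]))). -/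

import Mathlib

/-- The alphabet `A = {a, b, c}`. -/
inductive A : Type
  | a | b | c
deriving DecidableEq, Repr

/-- The substitution `φ0 : a ↦ abc, b ↦ a, c ↦ ac`. -/
def phi0 : A → List A
  | A.a => [A.a, A.b, A.c]
  | A.b => [A.a]
  | A.c => [A.a, A.c]

/-- The substitution `φ1 : a ↦ cba, b ↦ a, c ↦ ca`. -/
def phi1 : A → List A
  | A.a => [A.c, A.b, A.a]
  | A.b => [A.a]
  | A.c => [A.c, A.a]

/-- The action of a morphism (given by its values on letters) on finite words. -/
def applyMorphism {α β : Type*} (φ : α → List β) (l : List α) : List β :=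
  l.flatMap φ

/-- The prefix `u[:n]` of length `n` of an infinite word `u`. -/
def pref {α : Type*} (u : ℕ → α) (n : ℕ) : List α :=
  (List.range n).map u

/-- A finite word `l` is a prefix of the infinite word `u`. -/
def PrefixOfSeq {α : Type*} (l : List α) (u : ℕ → α) : Prop :=
  ∀ i : ℕ, ∀ h : i < l.length, l.get ⟨i, h⟩ = u i

/-- The infinite word `u` is a (one-sided) fixed point of the substitution `φ`,
i.e. `φ(u) = u`: the image of every prefix of `u` is again a prefix of `u`. -/
def IsFixedPointOf {α : Type*} (φ : α → List α) (u : ℕ → α) : Prop :=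
  ∀ n : ℕ, PrefixOfSeq (applyMorphism φ (pref u n)) u

/-- A brick over the alphabet `A`: an element of `A × A × ℤ`. -/
abbrev Brick : Type := A × A × ℤ

/-- The substitution `μ` over `C = {0, 1, …, 8}`. -/
def mu : Fin 9 → List (Fin 9)
  | 0 => [0, 1]
  | 1 => [2, 3]
  | 2 => [4, 5]
  | 3 => [4, 1]
  | 4 => [2, 3, 1]
  | 5 => [2, 6]
  | 6 => [4, 7, 8]
  | 7 => [2]
  | 8 => [6, 6]

/-- The morphism `π : C → B(A)` sending each letter of `C` to a brick. -/
def piB : Fin 9 → Brick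
  | 0 => (A.a, A.c, 0)
  | 1 => (A.b, A.a, -1)
  | 2 => (A.c, A.c, 1)
  | 3 => (A.a, A.b, 1)
  | 4 => (A.a, A.a, -1)
  | 5 => (A.c, A.c, -1)
  | 6 => (A.a, A.a, 1)
  | 7 => (A.b, A.c, -1)
  | 8 => (A.c, A.b, 0)

/-- `τ_0`: projection of a finite word of bricks onto the first components. -/
def tau0 (z : List Brick) : List A := z.map (fun b => b.1)

/-- `τ_1`: projection of a finite word of bricks onto the second components. -/
def tau1 (z : List Brick) : List A := z.map (fun b => b.2.1)

/-- The map `s_0 : C → A*`. -/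
def s0 : Fin 9 → List A
  | 0 => [A.c]
  | 1 => []
  | 2 => []
  | 3 => [A.c]
  | 4 => [A.c]
  | 5 => [A.c]
  | 6 => []
  | 7 => [A.a]
  | 8 => [A.c]

/-- The map `s_1 : C → A*`. -/
def s1 : Fin 9 → List A
  | 0 => []
  | 1 => [A.a]
  | 2 => [A.a]
  | 3 => []
  | 4 => []
  | 5 => []
  | 6 => [A.a]
  | 7 => [A.a]
  | 8 => []

/-!
The identity is a telescoping sum. Call the pair of consecutive letters `x y` *carrying*
when `τ_i(π(μ y)) · s_i(y) = s_i(x) · φ_i(τ_i(π y))` for both `i`; then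
`τ_i(π(μ(w[:(n+1)]))) · s_i(w n) = φ_i(τ_i(π(w[:(n+1)])))` follows by induction on `n`, the
initial letter `0` being handled by `τ_i(π(μ 0)) · s_i(0) = φ_i(τ_i(π 0))`. That all
consecutive letters of `w` are carrying is a property of two-letter factors that is inherited
from `w` by `μ(w) = w`: it holds inside every `μ c`, and across the border of `μ x μ y`
whenever `x y` is carrying; both are finite checks.
-/

section Morphism

variable {α β γ : Type*}

theorem applyMorphism_append (φ : α → List β) (l₁ l₂ : List α) :
    applyMorphism φ (l₁ ++ l₂) = applyMorphism φ l₁ ++ applyMorphism φ l₂ :=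
  List.flatMap_append

theorem applyMorphism_singleton (φ : α → List β) (a : α) : applyMorphism φ [a] = φ a :=
  List.flatMap_singleton φ a

theorem map_applyMorphism (σ : α → List β) (h : β → γ) (l : List α) :
    (applyMorphism σ l).map h = applyMorphism (fun a => (σ a).map h) l :=
  List.map_flatMap ..

theorem applyMorphism_map (φ : β → List γ) (h : α → β) (l : List α) :
    applyMorphism φ (l.map h) = applyMorphism (fun a => φ (h a)) l :=
  List.flatMap_map ..

theorem length_le_length_applyMorphism {σ : α → List β} (hσ : ∀ a, σ a ≠ []) :
    ∀ l : List α, l.length ≤ (applyMorphism σ l).length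
  | [] => le_rfl
  | a :: l => by
    have ha := List.length_pos_iff.2 (hσ a)
    have hl := length_le_length_applyMorphism hσ l
    rw [applyMorphism, List.flatMap_cons, List.length_append, ← applyMorphism, List.length_cons]
    omega

theorem isChain_applyMorphism {σ : α → List β} {R : β → β → Prop} {S : α → α → Prop}
    (hσ : ∀ a, σ a ≠ []) (hinner : ∀ a, (σ a).IsChain R)
    (hborder : ∀ x y, S x y → ∀ a ∈ (σ x).getLast?, ∀ b ∈ (σ y).head?, R a b)
    {l : List α} (hl : l.IsChain S) : (applyMorphism σ l).IsChain R := by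
  rw [applyMorphism, List.flatMap_def, List.isChain_flatten (by simpa using fun a _ => hσ a)]
  exact ⟨by simpa using fun a _ => hinner a, List.isChain_map_of_isChain _ hborder hl⟩

end Morphism

section Prefix

variable {α : Type*}

theorem length_pref (u : ℕ → α) (n : ℕ) : (pref u n).length = n := by
  simp [pref]

theorem pref_succ (u : ℕ → α) (n : ℕ) : pref u (n + 1) = pref u n ++ [u n] := by
  simp [pref, List.range_succ]

theorem pref_succ_eq_cons (u : ℕ → α) (n : ℕ) :
    pref u (n + 1) = u 0 :: pref (fun m => u (m + 1)) n := by
  simp [pref, List.range_succ_eq_map]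

theorem isChain_pref_iff {R : α → α → Prop} {u : ℕ → α} {n : ℕ} :
    (pref u n).IsChain R ↔ ∀ m < n - 1, R (u m) (u (m + 1)) := by
  rw [pref, List.isChain_map, List.isChain_range]

end Prefix

section Carry

variable {α β : Type*}

/-- Reading `y` after `x`, the surplus `s x` of `g` over `f` is passed on as the surplus `s y`. -/
def Carries (f g s : α → List β) (x y : α) : Prop :=
  f y ++ s y = s x ++ g y

instance [DecidableEq β] (f g s : α → List β) : DecidableRel (Carries f g s) :=
  fun _ _ => inferInstanceAs (Decidable (_ = _))

theorem applyMorphism_pref_append_of_carries {f g s : α → List β} {u : ℕ → α}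
    (h₀ : f (u 0) ++ s (u 0) = g (u 0)) (hstep : ∀ n, Carries f g s (u n) (u (n + 1))) :
    ∀ n, applyMorphism f (pref u (n + 1)) ++ s (u n) = applyMorphism g (pref u (n + 1))
  | 0 => by simpa [pref, applyMorphism] using h₀
  | n + 1 => by
    calc applyMorphism f (pref u (n + 2)) ++ s (u (n + 1))
        = applyMorphism f (pref u (n + 1)) ++ (f (u (n + 1)) ++ s (u (n + 1))) := by
          rw [pref_succ u (n + 1), applyMorphism_append, applyMorphism_singleton,
            List.append_assoc]
      _ = (applyMorphism f (pref u (n + 1)) ++ s (u n)) ++ g (u (n + 1)) := by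
          rw [hstep n, List.append_assoc]
      _ = applyMorphism g (pref u (n + 2)) := by
          rw [applyMorphism_pref_append_of_carries h₀ hstep n, pref_succ u (n + 1),
            applyMorphism_append, applyMorphism_singleton]

end Carry

section FixedPoint

variable {α : Type*} {σ : α → List α} {u : ℕ → α}

theorem IsFixedPointOf.applyMorphism_pref (hfix : IsFixedPointOf σ u) (n : ℕ) :
    applyMorphism σ (pref u n) = pref u (applyMorphism σ (pref u n)).length :=
  List.ext_get (length_pref ..).symm fun i h _ => by simpa [pref] using hfix n i h

theorem lt_length_applyMorphism_pref (hσ : ∀ a, σ a ≠ []) (hgrow : 2 ≤ (σ (u 0)).length)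
    {n : ℕ} (hn : 0 < n) : n < (applyMorphism σ (pref u n)).length := by
  obtain ⟨n, rfl⟩ := Nat.exists_eq_succ_of_ne_zero hn.ne'
  have hle := length_le_length_applyMorphism hσ (pref (fun m => u (m + 1)) n)
  rw [length_pref] at hle
  rw [pref_succ_eq_cons, applyMorphism, List.flatMap_cons, List.length_append, ← applyMorphism]
  omega

theorem IsFixedPointOf.rel_succ {R : α → α → Prop} (hfix : IsFixedPointOf σ u)
    (hσ : ∀ a, σ a ≠ []) (hgrow : 2 ≤ (σ (u 0)).length) (hinner : ∀ a, (σ a).IsChain R)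
    (hborder : ∀ x y, R x y → ∀ a ∈ (σ x).getLast?, ∀ b ∈ (σ y).head?, R a b) (m : ℕ) :
    R (u m) (u (m + 1)) := by
  suffices h : ∀ n, (pref u n).IsChain R from isChain_pref_iff.1 (h (m + 2)) m (by omega)
  intro n
  induction n with
  | zero => simp [pref]
  | succ n ih =>
    rcases Nat.eq_zero_or_pos n with rfl | hn
    · simp [pref]
    · have hchain := isChain_applyMorphism hσ hinner hborder ih
      rw [hfix.applyMorphism_pref, isChain_pref_iff] at hchain
      have hlong := lt_length_applyMorphism_pref hσ hgrow hn
      exact isChain_pref_iff.2 fun m hm => hchain m (by omega)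

end FixedPoint

def PiMuCarries (x y : Fin 9) : Prop :=
  Carries (fun c => tau0 ((mu c).map piB)) (fun c => phi0 (piB c).1) s0 x y ∧
    Carries (fun c => tau1 ((mu c).map piB)) (fun c => phi1 (piB c).2.1) s1 x y

instance : DecidableRel PiMuCarries :=
  fun _ _ => inferInstanceAs (Decidable (_ ∧ _))

theorem mu_ne_nil : ∀ c, mu c ≠ [] := by decide

theorem isChain_piMuCarries_mu : ∀ c, (mu c).IsChain PiMuCarries := by decide

theorem PiMuCarries.mu_border : ∀ x y, PiMuCarries x y →
    ∀ a ∈ (mu x).getLast?, ∀ b ∈ (mu y).head?, PiMuCarries a b := by decide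

/-- For every `n ≥ 0` and each `i ∈ {0,1}`, with `x = w[n]` the last letter of
`w[:(n+1)]`, we have `τ_i(π(μ(w[:(n+1)]))) · s_i(x) = φ_i(τ_i(π(w[:(n+1)])))`;
in particular `τ_i(π(μ(w[:(n+1)])))` is a prefix of `φ_i(τ_i(π(w[:(n+1)])))`. -/
theorem tau_pi_mu_prefix
    (w : ℕ → Fin 9)
    (hw0 : w 0 = 0) (hfixw : IsFixedPointOf mu w) :
    ∀ n : ℕ,
      (tau0 ((applyMorphism mu (pref w (n + 1))).map piB) ++ s0 (w n) =
          applyMorphism phi0 (tau0 ((pref w (n + 1)).map piB)) ∧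
        tau0 ((applyMorphism mu (pref w (n + 1))).map piB) <+:
          applyMorphism phi0 (tau0 ((pref w (n + 1)).map piB))) ∧
      (tau1 ((applyMorphism mu (pref w (n + 1))).map piB) ++ s1 (w n) =
          applyMorphism phi1 (tau1 ((pref w (n + 1)).map piB)) ∧
        tau1 ((applyMorphism mu (pref w (n + 1))).map piB) <+:
          applyMorphism phi1 (tau1 ((pref w (n + 1)).map piB))) := by
  have hcarry : ∀ m, PiMuCarries (w m) (w (m + 1)) :=
    hfixw.rel_succ mu_ne_nil (by rw [hw0]; decide) isChain_piMuCarries_mu PiMuCarries.mu_border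
  intro n
  have e₀ := applyMorphism_pref_append_of_carries (by rw [hw0]; decide) (fun m => (hcarry m).1) n
  have e₁ := applyMorphism_pref_append_of_carries (by rw [hw0]; decide) (fun m => (hcarry m).2) n
  simp only [tau0, tau1, map_applyMorphism, applyMorphism_map] at e₀ e₁ ⊢
  exact ⟨⟨e₀, _, e₀⟩, ⟨e₁, _, e₁⟩⟩
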